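/- arXiv:1803.05207 — 2 statements merged into one kernel-verified Lean document; each statement's English description precedes it below -/
import Mathlib

section
/- Let J ≥ 1, 0 ≤ j ≤ J−1, 0 ≤ L ≤ j and μ ∈ {0,…,2^j−1}. Let y ∈ ℝ^{2^J} and suppose that both y^{(j)}_s = 0 and y^{(j+1)}_s = 0 for every s ∈ {0,…,2^j−1} that is not of the form s = (μ+r) mod 2^j with 0 ≤ r ≤ 2^L−1. Then for every r ∈ {0,…,2^L−1} the first half of y^{(j+1)} is recovered from y^{(j)} and 2^L equidistant oddly indexed samples of ŷ via y^{(j+1)}_{(μ+r) mod 2^j} = (1/2) · ( y^{(j)}_{(μ+r) mod 2^j} + 2^{−L} · ω_{2^{j+1}}^{−((μ+r) mod 2^j)} · Σ_{p=0}^{2^L−1} ω_{2^L}^{−p(μ+r)} · ŷ_{2^{J−L}p + 2^{J−j−1}} ). -/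
/-- `ω_M = e^{-2πi/M}`. -/
noncomputable def dftOmega (M : ℕ) : ℂ :=
  Complex.exp (-2 * Real.pi * Complex.I / M)

/-- Discrete Fourier transform of `y ∈ ℂ^M`: `ŷ_k = Σ_{l=0}^{M-1} ω_M^{kl} y_l`. -/
noncomputable def dft (M : ℕ) (y : ℕ → ℂ) (k : ℕ) : ℂ :=
  ∑ l ∈ Finset.range M, dftOmega M ^ (k * l) * y l

/-- Periodization `y^{(j)} ∈ ℝ^{2^j}` of `y ∈ ℝ^{2^J}`:
`y^{(j)}_k = Σ_{l=0}^{2^{J-j}-1} y_{k + 2^j l}`. -/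
def periodization (J j : ℕ) (y : ℕ → ℝ) (k : ℕ) : ℝ :=
  ∑ l ∈ Finset.range (2 ^ (J - j)), y (k + 2 ^ j * l)

/-!
Splitting the DFT sum over `l` by residues mod `2^{j+1}` shows that the samples
`ŷ_{2^{J-L}p + 2^{J-j-1}}` are the DFT of `y^{(j+1)}` at the odd frequencies
`2^{j+1-L}p + 1`. An odd frequency only sees the differences
`y^{(j+1)}_s - y^{(j+1)}_{s+2^j} = 2y^{(j+1)}_s - y^{(j)}_s` (`s < 2^j`), weighted by
`ω_{2^{j+1}}^s ω_{2^L}^{ps}`. Inverting the length-`2^L` DFT in `p` isolates the indices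
`s ≡ μ + r (mod 2^L)`; of those, only `s = (μ + r) mod 2^j` lies in the window of length `2^L`
that carries the support, and one solves for `y^{(j+1)}_s`.
-/

open Finset

lemma isPrimitiveRoot_dftOmega {M : ℕ} (hM : M ≠ 0) : IsPrimitiveRoot (dftOmega M) M := by
  have h : dftOmega M = (Complex.exp (2 * Real.pi * Complex.I / M))⁻¹ := by
    rw [dftOmega, ← Complex.exp_neg]
    ring_nf
  exact h ▸ (Complex.isPrimitiveRoot_exp M hM).inv

lemma dftOmega_pow_self (M : ℕ) : dftOmega M ^ M = 1 := by
  rcases eq_or_ne M 0 with rfl | hM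
  · exact pow_zero _
  · exact (isPrimitiveRoot_dftOmega hM).pow_eq_one

lemma dftOmega_mul_pow (M : ℕ) {d : ℕ} (hd : d ≠ 0) : dftOmega (M * d) ^ d = dftOmega M := by
  rw [dftOmega, dftOmega, ← Complex.exp_nat_mul, Nat.cast_mul, mul_div_assoc', mul_comm (M : ℂ),
    ← mul_div_mul_left (-2 * Real.pi * Complex.I) (M : ℂ) (Nat.cast_ne_zero.2 hd)]

lemma dftOmega_two : dftOmega 2 = -1 := by
  rw [dftOmega, Nat.cast_ofNat,
    show -2 * (Real.pi : ℂ) * Complex.I / 2 = -(Real.pi * Complex.I) by ring,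
    Complex.exp_neg, Complex.exp_pi_mul_I, inv_neg, inv_one]

lemma dftOmega_two_mul_pow {N : ℕ} (hN : N ≠ 0) : dftOmega (2 * N) ^ N = -1 := by
  rw [dftOmega_mul_pow 2 hN, dftOmega_two]

lemma IsPrimitiveRoot.sum_range_zpow_pow {K : Type*} [Field K] {ζ : K} {N : ℕ}
    (hζ : IsPrimitiveRoot ζ N) (a : ℤ) :
    ∑ p ∈ range N, (ζ ^ a) ^ p = if (N : ℤ) ∣ a then (N : K) else 0 := by
  split_ifs with ha
  · simp [(hζ.zpow_eq_one_iff_dvd a).2 ha]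
  · rw [geom_sum_eq (mt (hζ.zpow_eq_one_iff_dvd a).1 ha), ← zpow_natCast, ← zpow_mul, mul_comm,
      zpow_mul, hζ.zpow_eq_one, one_zpow, sub_self, zero_div]

lemma IsPrimitiveRoot.sum_zpow_mul_sum_pow_mul {K : Type*} [Field K] {ζ : K} {N : ℕ}
    (hζ : IsPrimitiveRoot ζ N) (hN : N ≠ 0) (S : Finset ℕ) (c : ℕ → K) (m : ℕ) :
    ∑ p ∈ range N, ζ ^ (-((p * m : ℕ) : ℤ)) * ∑ s ∈ S, ζ ^ (p * s) * c s =
      N * ∑ s ∈ S with m ≡ s [MOD N], c s := by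
  have hζ0 : ζ ≠ 0 := hζ.ne_zero hN
  have hterm : ∀ p s : ℕ, ζ ^ (-((p * m : ℕ) : ℤ)) * (ζ ^ (p * s) * c s) =
      (ζ ^ ((s : ℤ) - m)) ^ p * c s := by
    intro p s
    rw [← mul_assoc, ← zpow_natCast ζ (p * s), ← zpow_add₀ hζ0, ← zpow_natCast, ← zpow_mul]
    push_cast
    ring_nf
  simp_rw [mul_sum, hterm]
  rw [sum_comm, sum_filter]
  refine sum_congr rfl fun s _ => ?_
  rw [← sum_mul, hζ.sum_range_zpow_pow]
  simp only [← Nat.modEq_iff_dvd, ite_mul, zero_mul]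

lemma sum_range_mul_eq_sum_sum {β : Type*} [AddCommMonoid β] (f : ℕ → β) (a b : ℕ) :
    ∑ l ∈ range (a * b), f l = ∑ s ∈ range a, ∑ t ∈ range b, f (s + a * t) := by
  rw [sum_comm]
  induction b with
  | zero => simp
  | succ b ih =>
    rw [Nat.mul_succ, sum_range_add, ih, sum_range_succ]
    simp only [add_comm]

lemma dft_mul_mul (M d : ℕ) (y : ℕ → ℂ) (k : ℕ) :
    dft (M * d) y (d * k) = dft M (fun s => ∑ t ∈ range d, y (s + M * t)) k := by
  rcases eq_or_ne d 0 with rfl | hd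
  · simp [dft]
  rw [dft, dft, sum_range_mul_eq_sum_sum]
  refine sum_congr rfl fun s _ => ?_
  rw [mul_sum]
  refine sum_congr rfl fun t _ => ?_
  rw [show d * k * (s + M * t) = d * (k * s + M * (k * t)) by ring, pow_mul, dftOmega_mul_pow M hd,
    pow_add, pow_mul (dftOmega M) M, dftOmega_pow_self, one_pow, mul_one]

lemma dft_two_mul_of_odd {N : ℕ} (hN : N ≠ 0) (z : ℕ → ℂ) {k : ℕ} (hk : Odd k) :
    dft (2 * N) z k = ∑ s ∈ range N, dftOmega (2 * N) ^ (k * s) * (z s - z (s + N)) := by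
  rw [dft, show range (2 * N) = range (N + N) by rw [two_mul], sum_range_add, ← sum_add_distrib]
  refine sum_congr rfl fun s _ => ?_
  rw [mul_add, pow_add, pow_mul' _ k N, dftOmega_two_mul_pow hN, hk.neg_one_pow, add_comm N s]
  ring

lemma periodization_eq_add_periodization_succ {J j : ℕ} (hj : j + 1 ≤ J) (y : ℕ → ℝ) (s : ℕ) :
    periodization J j y s =
      periodization J (j + 1) y s + periodization J (j + 1) y (s + 2 ^ j) := by
  rw [periodization, show J - j = 1 + (J - (j + 1)) by omega, pow_add, pow_one,
    sum_range_mul_eq_sum_sum, sum_range_succ, sum_range_one]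
  congr 1 <;> refine sum_congr rfl fun t _ => congrArg y ?_ <;> ring

lemma dft_odd_sample {J j L : ℕ} (hj : j + 1 ≤ J) (hL : L ≤ j) (y : ℕ → ℝ) (p : ℕ) :
    dft (2 ^ J) (fun l => (y l : ℂ)) (2 ^ (J - L) * p + 2 ^ (J - j - 1)) =
      ∑ s ∈ range (2 ^ j), dftOmega (2 ^ L) ^ (p * s) *
        (dftOmega (2 ^ (j + 1)) ^ s *
          (2 * (periodization J (j + 1) y s : ℂ) - (periodization J j y s : ℂ))) := by
  have hJ : 2 ^ J = 2 ^ (j + 1) * 2 ^ (J - (j + 1)) := by rw [← pow_add]; congr 1; omega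
  have hk : 2 ^ (J - L) * p + 2 ^ (J - j - 1) =
      2 ^ (J - (j + 1)) * (2 * 2 ^ (j - L) * p + 1) := by
    rw [show J - L = (J - (j + 1)) + 1 + (j - L) by omega, show J - j - 1 = J - (j + 1) by omega]
    ring
  have hω : dftOmega (2 ^ (j + 1)) ^ (2 * 2 ^ (j - L)) = dftOmega (2 ^ L) := by
    rw [show 2 ^ (j + 1) = 2 ^ L * (2 * 2 ^ (j - L)) by
      rw [← pow_succ', ← pow_add]; congr 1; omega, dftOmega_mul_pow _ (by positivity)]
  have hz : (fun s => ∑ t ∈ range (2 ^ (J - (j + 1))), (y (s + 2 ^ (j + 1) * t) : ℂ)) =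
      fun s => (periodization J (j + 1) y s : ℂ) := by
    ext s; push_cast [periodization]; rfl
  rw [hJ, hk, dft_mul_mul, hz, pow_succ',
    dft_two_mul_of_odd (by positivity) _ ⟨2 ^ (j - L) * p, by ring⟩, ← pow_succ']
  refine sum_congr rfl fun s _ => ?_
  rw [periodization_eq_add_periodization_succ hj, add_mul, one_mul, pow_add, mul_assoc, pow_mul,
    pow_mul, hω, ← pow_mul]
  push_cast
  ring

lemma sum_range_modEq_eq_of_window_support {M : Type*} [AddCommMonoid M] {a b μ r : ℕ}
    (hab : a ∣ b) (hb : b ≠ 0) (hr : r < a) (c : ℕ → M)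
    (hc : ∀ s < b, (∀ r' < a, s ≠ (μ + r') % b) → c s = 0) :
    ∑ s ∈ range b with μ + r ≡ s [MOD a], c s = c ((μ + r) % b) := by
  have hmod : ∀ m, m % b ≡ m [MOD a] := fun m => Nat.mod_mod_of_dvd m hab
  refine sum_eq_single_of_mem _
    (mem_filter.2 ⟨mem_range.2 (Nat.mod_lt _ (by omega)), (hmod _).symm⟩) fun s hs hne => ?_
  obtain ⟨hs, hsr⟩ := mem_filter.1 hs
  by_cases hw : ∀ r' < a, s ≠ (μ + r') % b
  · exact hc s (mem_range.1 hs) hw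
  push Not at hw
  obtain ⟨r', hr', rfl⟩ := hw
  have : r = r' := by
    have := Nat.ModEq.add_left_cancel' μ (hsr.trans (hmod _))
    rwa [Nat.ModEq, Nat.mod_eq_of_lt hr, Nat.mod_eq_of_lt hr'] at this
  exact absurd (by rw [this]) hne

theorem stmt_12_general (J : ℕ) (hJ : 1 ≤ J) (j : ℕ) (hj : j ≤ J - 1)
    (L : ℕ) (hL : L ≤ j) (μ : ℕ) (y : ℕ → ℝ)
    (hsupp : ∀ s, s < 2 ^ j → (∀ r, r < 2 ^ L → s ≠ (μ + r) % 2 ^ j) →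
      periodization J j y s = 0 ∧ periodization J (j + 1) y s = 0) :
    ∀ r, r < 2 ^ L →
      (periodization J (j + 1) y ((μ + r) % 2 ^ j) : ℂ) =
        (1 / 2) * ((periodization J j y ((μ + r) % 2 ^ j) : ℂ) +
          ((2 : ℂ) ^ L)⁻¹ * dftOmega (2 ^ (j + 1)) ^ (-(((μ + r) % 2 ^ j : ℕ) : ℤ)) *
            ∑ p ∈ Finset.range (2 ^ L),
              dftOmega (2 ^ L) ^ (-((p * (μ + r) : ℕ) : ℤ)) *
                dft (2 ^ J) (fun l => (y l : ℂ)) (2 ^ (J - L) * p + 2 ^ (J - j - 1))) := by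
  intro r hr
  set n := (μ + r) % 2 ^ j
  set c : ℕ → ℂ := fun s => dftOmega (2 ^ (j + 1)) ^ s *
    (2 * (periodization J (j + 1) y s : ℂ) - (periodization J j y s : ℂ)) with hc
  have hsum : ∑ p ∈ range (2 ^ L), dftOmega (2 ^ L) ^ (-((p * (μ + r) : ℕ) : ℤ)) *
      dft (2 ^ J) (fun l => (y l : ℂ)) (2 ^ (J - L) * p + 2 ^ (J - j - 1)) = 2 ^ L * c n := by
    simp only [dft_odd_sample (by omega : j + 1 ≤ J) hL y]
    rw [(isPrimitiveRoot_dftOmega (by positivity)).sum_zpow_mul_sum_pow_mul (by positivity),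
      sum_range_modEq_eq_of_window_support (pow_dvd_pow 2 hL) (by positivity) hr]
    · push_cast; rfl
    · intro s hs hw
      obtain ⟨h1, h2⟩ := hsupp s hs hw
      simp [h1, h2]
  have hω : dftOmega (2 ^ (j + 1)) ≠ 0 := Complex.exp_ne_zero _
  rw [hsum, hc, zpow_neg, zpow_natCast]
  field_simp
  ring

theorem stmt_12 (J : ℕ) (hJ : 1 ≤ J) (j : ℕ) (hj : j ≤ J - 1)
    (L : ℕ) (hL : L ≤ j) (μ : ℕ) (hμ : μ < 2 ^ j) (y : ℕ → ℝ)
    (hsupp : ∀ s, s < 2 ^ j → (∀ r, r < 2 ^ L → s ≠ (μ + r) % 2 ^ j) →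
      periodization J j y s = 0 ∧ periodization J (j + 1) y s = 0) :
    ∀ r, r < 2 ^ L →
      (periodization J (j + 1) y ((μ + r) % 2 ^ j) : ℂ) =
        (1 / 2) * ((periodization J j y ((μ + r) % 2 ^ j) : ℂ) +
          ((2 : ℂ) ^ L)⁻¹ * dftOmega (2 ^ (j + 1)) ^ (-(((μ + r) % 2 ^ j : ℕ) : ℤ)) *
            ∑ p ∈ Finset.range (2 ^ L),
              dftOmega (2 ^ L) ^ (-((p * (μ + r) : ℕ) : ℤ)) *
                dft (2 ^ J) (fun l => (y l : ℂ)) (2 ^ (J - L) * p + 2 ^ (J - j - 1))) :=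
  stmt_12_general J hJ j hj L hL μ y hsupp
end

section
/- Let J ≥ 0 and 0 ≤ j ≤ J, let m ≥ 1 with m ≤ 2^j, let μ ∈ {0,…,2^J−1}, and let y ∈ ℝ^{2^J} have only nonnegative entries and satisfy: y_l = 0 unless l ≡ (μ+r) mod 2^J or l ≡ (2^J−1−μ−r) mod 2^J for some r ∈ {0,…,m−1}. Then the periodization y^{(j)} satisfies y^{(j)}_s = 0 unless s = (μ+r) mod 2^j or s = (2^j−1−μ−r) mod 2^j for some r ∈ {0,…,m−1}; i.e., the support of y^{(j)} is contained in a block of length m starting at μ mod 2^j together with its reflection. -/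
theorem stmt_17 (J j : ℕ) (hj : j ≤ J) (m : ℕ) (hm : 1 ≤ m) (hm2 : m ≤ 2 ^ j)
    (μ : ℕ) (hμ : μ < 2 ^ J) (y : ℕ → ℝ) (hpos : ∀ k, 0 ≤ y k)
    (hsupp : ∀ l : ℕ, l < 2 ^ J →
      (∀ r, r < m → ¬((l : ℤ) ≡ (μ : ℤ) + r [ZMOD (2 ^ J : ℕ)]) ∧
        ¬((l : ℤ) ≡ (2 ^ J : ℤ) - 1 - μ - r [ZMOD (2 ^ J : ℕ)])) → y l = 0) :
    ∀ s : ℕ, s < 2 ^ j →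
      (∀ r, r < m → ¬((s : ℤ) ≡ (μ : ℤ) + r [ZMOD (2 ^ j : ℕ)]) ∧
        ¬((s : ℤ) ≡ (2 ^ j : ℤ) - 1 - μ - r [ZMOD (2 ^ j : ℕ)])) →
      periodization J j y s = 0 := by
  intro s hs hcong
  have hdvd : ((2 ^ j : ℕ) : ℤ) ∣ ((2 ^ J : ℕ) : ℤ) := by
    exact_mod_cast pow_dvd_pow 2 hj
  unfold periodization
  apply Finset.sum_eq_zero
  intro l hl
  simp only [Finset.mem_range] at hl
  have hlt : s + 2 ^ j * l < 2 ^ J := by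
    calc s + 2 ^ j * l < 2 ^ j + 2 ^ j * l := by omega
    _ = 2 ^ j * (l + 1) := by ring
    _ ≤ 2 ^ j * 2 ^ (J - j) := by
        exact Nat.mul_le_mul_left _ (by omega)
    _ = 2 ^ J := by rw [← pow_add]; congr 1; omega
  apply hsupp _ hlt
  intro r hr
  obtain ⟨h1, h2⟩ := hcong r hr
  constructor
  · intro h
    apply h1
    have h' : ((s + 2 ^ j * l : ℕ) : ℤ) ≡ (μ : ℤ) + r [ZMOD (2 ^ j : ℕ)] :=
      h.of_dvd hdvd
    have hself : ((s + 2 ^ j * l : ℕ) : ℤ) ≡ (s : ℤ) [ZMOD (2 ^ j : ℕ)] := by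
      push_cast
      exact (Int.modEq_iff_dvd.mpr ⟨-l, by ring⟩)
    exact hself.symm.trans h'
  · intro h
    apply h2
    have h' : ((s + 2 ^ j * l : ℕ) : ℤ) ≡ (2 ^ J : ℤ) - 1 - μ - r [ZMOD (2 ^ j : ℕ)] :=
      h.of_dvd hdvd
    have hself : ((s + 2 ^ j * l : ℕ) : ℤ) ≡ (s : ℤ) [ZMOD (2 ^ j : ℕ)] := by
      push_cast
      exact (Int.modEq_iff_dvd.mpr ⟨-l, by ring⟩)
    have hJ : ((2 ^ J : ℤ) - 1 - μ - r) ≡ (2 ^ j : ℤ) - 1 - μ - r [ZMOD (2 ^ j : ℕ)] := by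
      have : ((2 ^ J : ℤ)) ≡ (2 ^ j : ℤ) [ZMOD (2 ^ j : ℕ)] := by
        apply Int.modEq_iff_dvd.mpr
        push_cast
        exact dvd_sub dvd_rfl (by exact_mod_cast pow_dvd_pow 2 hj)
      exact (this.sub_right _).sub_right _ |>.sub_right _
    exact (hself.symm.trans h').trans hJ
end
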